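/- If ψ is a first-order formula, X a team with dom(X) = {w̄}, FV(ψ) ⊆ {w̄} and w₀ ∈ w̄, then M,X ⊨_mt ψ ⩓ ∃w̄ (w₀ = w₀ ∨ w₀ ≠ w₀) if and only if X ⊆ ⟦ψ⟧^M_{w̄}. -/

import Mathlib

set_option linter.unusedSectionVars false

namespace Paper

/-- A first-order vocabulary (signature): function and relation symbols with arities. -/
structure Sig where
  Func : Type
  arF : Func → ℕ
  Rel : Type
  arR : Rel → ℕ

/-- A τ-structure with universe `α`. -/
structure Struc (σ : Sig) (α : Type) where
  interpF : (f : σ.Func) → (Fin (σ.arF f) → α) → α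
  interpR : (r : σ.Rel) → (Fin (σ.arR r) → α) → Prop

/-- First-order terms; variables are natural numbers. -/
inductive Term (σ : Sig) where
  | var : ℕ → Term σ
  | func : (f : σ.Func) → (Fin (σ.arF f) → Term σ) → Term σ

/-- Interpretation of a term under an assignment. -/
def Term.eval {σ : Sig} {α : Type} (𝕄 : Struc σ α) (s : ℕ → α) : Term σ → α
  | .var x => s x
  | .func f ts => 𝕄.interpF f (fun i => (ts i).eval 𝕄 s)

/-- Variables occurring in a term. -/
def Term.fv {σ : Sig} : Term σ → Finset ℕ
  | .var x => {x}
  | .func _ ts => Finset.univ.biUnion fun i => (ts i).fv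

/-- A team: a finite set of variables (the domain) together with a set of assignments.
Assignments are encoded as total functions `ℕ → α` that take the value `default`
outside the domain of the team (so that an assignment `s : dom(X) → M` is identified
with its extension by `default`). -/
structure Team (α : Type) [Inhabited α] where
  dom : Finset ℕ
  assignments : Set (ℕ → α)
  supported : ∀ s ∈ assignments, ∀ y ∉ dom, s y = default

variable {σ : Sig} {α : Type} [Inhabited α]

/-- The team `∃x X`: domain `dom(X) \ {x}`, consisting of all (supported) `s` such that
`s[a/x] ∈ X` for some `a` (which subsumes the clause "or `s ∈ X`" in the encoding). -/
def Team.eexists (x : ℕ) (X : Team α) : Team α where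
  dom := X.dom.erase x
  assignments := {s | (∀ y ∉ X.dom.erase x, s y = default) ∧
    ∃ a : α, Function.update s x a ∈ X.assignments}
  supported := fun _ hs => hs.1

/-- The team `∀x X`: domain `dom(X) \ {x}`, consisting of all (supported) `s` such that
`s[a/x] ∈ X` for all `a ∈ M` (when `x ∈ dom(X)`), or `s ∈ X` (when `x ∉ dom(X)`). -/
def Team.eforall (x : ℕ) (X : Team α) : Team α where
  dom := X.dom.erase x
  assignments := {s | (∀ y ∉ X.dom.erase x, s y = default) ∧
    if x ∈ X.dom then ∀ a : α, Function.update s x a ∈ X.assignments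
    else s ∈ X.assignments}
  supported := fun _ hs => hs.1

/-- Iterated application `∃x̄ X`. -/
def Team.eexistsN (l : List ℕ) (X : Team α) : Team α := l.foldr Team.eexists X

/-- Iterated application `∀x̄ X`. -/
def Team.eforallN (l : List ℕ) (X : Team α) : Team α := l.foldr Team.eforall X

/-- Restriction of an assignment to a finite set of variables (default outside). -/
def restrictFun (d : Finset ℕ) (s : ℕ → α) : ℕ → α := fun y => if y ∈ d then s y else default

/-- The restriction `X ↾ V` of a team, with domain `dom(X) ∩ V`. -/
def Team.restrict (X : Team α) (V : Finset ℕ) : Team α where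
  dom := X.dom ∩ V
  assignments := {t | ∃ s ∈ X.assignments, t = restrictFun (X.dom ∩ V) s}
  supported := by rintro t ⟨s, _, rfl⟩ y hy; simp only [restrictFun]; exact if_neg hy

/-- The full team on a domain `d`: all (supported) assignments. -/
def Team.full (α : Type) [Inhabited α] (d : Finset ℕ) : Team α where
  dom := d
  assignments := {s | ∀ y ∉ d, s y = default}
  supported := fun _ hs => hs

/-- The complement team `X^c`: all assignments with domain `dom(X)` not in `X`. -/
def Team.compl (X : Team α) : Team α where
  dom := X.dom
  assignments := {s | (∀ y ∉ X.dom, s y = default) ∧ s ∉ X.assignments}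
  supported := fun _ hs => hs.1

/-- Union of two teams. -/
def Team.unionT (X Y : Team α) : Team α where
  dom := X.dom ∪ Y.dom
  assignments := X.assignments ∪ Y.assignments
  supported := by
    rintro s (hs | hs) y hy
    · exact X.supported s hs y (fun h => hy (Finset.mem_union_left _ h))
    · exact Y.supported s hs y (fun h => hy (Finset.mem_union_right _ h))

/-- The team `X[M/x] = {s[a/x] | s ∈ X, a ∈ M}`. -/
def Team.subM (X : Team α) (x : ℕ) : Team α where
  dom := insert x X.dom
  assignments := {t | ∃ s ∈ X.assignments, ∃ a : α, t = Function.update s x a}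
  supported := by
    rintro t ⟨s, hs, a, rfl⟩ y hy
    have hyx : y ≠ x := fun h => hy (h ▸ Finset.mem_insert_self x X.dom)
    rw [Function.update_of_ne hyx]
    exact X.supported s hs y (fun h => hy (Finset.mem_insert_of_mem h))

/-- The team `X[f/x] = {s[f(s)/x] | s ∈ X}` for `f : X → M`. -/
def Team.subf (X : Team α) (x : ℕ) (f : (ℕ → α) → α) : Team α where
  dom := insert x X.dom
  assignments := {t | ∃ s ∈ X.assignments, t = Function.update s x (f s)}
  supported := by
    rintro t ⟨s, hs, rfl⟩ y hy
    have hyx : y ≠ x := fun h => hy (h ▸ Finset.mem_insert_self x X.dom)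
    rw [Function.update_of_ne hyx]
    exact X.supported s hs y (fun h => hy (Finset.mem_insert_of_mem h))

/-- The team `X[F/x] = {s[a/x] | s ∈ X, a ∈ F(s)}` for `F : X → P(M)`. -/
def Team.subF (X : Team α) (x : ℕ) (F : (ℕ → α) → Set α) : Team α where
  dom := insert x X.dom
  assignments := {t | ∃ s ∈ X.assignments, ∃ a ∈ F s, t = Function.update s x a}
  supported := by
    rintro t ⟨s, hs, a, _, rfl⟩ y hy
    have hyx : y ≠ x := fun h => hy (h ▸ Finset.mem_insert_self x X.dom)
    rw [Function.update_of_ne hyx]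
    exact X.supported s hs y (fun h => hy (Finset.mem_insert_of_mem h))

/-- Simultaneous update `s[v̄/x̄]` of an assignment along a list of variables. -/
def updVec (s : ℕ → α) (l : List ℕ) (v : Fin l.length → α) : ℕ → α :=
  fun y => if h : y ∈ l then v ⟨l.idxOf y, List.idxOf_lt_length_iff.mpr h⟩ else s y

theorem updVec_not_mem (s : ℕ → α) (l : List ℕ) (v : Fin l.length → α) {y : ℕ} (h : y ∉ l) :
    updVec s l v y = s y := dif_neg h

/-- The team `X[M/x̄]`. -/
def Team.subMVec (X : Team α) (l : List ℕ) : Team α where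
  dom := X.dom ∪ l.toFinset
  assignments := {t | ∃ s ∈ X.assignments, ∃ v : Fin l.length → α, t = updVec s l v}
  supported := by
    rintro t ⟨s, hs, v, rfl⟩ y hy
    rw [updVec_not_mem s l v (fun h => hy (Finset.mem_union_right _ (List.mem_toFinset.mpr h)))]
    exact X.supported s hs y (fun h => hy (Finset.mem_union_left _ h))

/-- The team `X[F/x̄] = {s[ā/x̄] | s ∈ X, ā ∈ F(s)}` for a set-valued `F`. -/
def Team.subFVec (X : Team α) (l : List ℕ) (F : (ℕ → α) → Set (Fin l.length → α)) :
    Team α where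
  dom := X.dom ∪ l.toFinset
  assignments := {t | ∃ s ∈ X.assignments, ∃ v ∈ F s, t = updVec s l v}
  supported := by
    rintro t ⟨s, hs, v, _, rfl⟩ y hy
    rw [updVec_not_mem s l v (fun h => hy (Finset.mem_union_right _ (List.mem_toFinset.mpr h)))]
    exact X.supported s hs y (fun h => hy (Finset.mem_union_left _ h))

/-- The team `Qx̄ Y = {s : dom(Y)∖{x̄} → M | Y_s(x̄) ∈ Q_M}` for a (local) generalized
quantifier `Q_M` of type `⟨k⟩` where `k` is the length of `x̄`. -/
def Team.qapp (l : List ℕ) (QM : Set (Set (Fin l.length → α))) (Y : Team α) : Team α where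
  dom := Y.dom \ l.toFinset
  assignments := {s | (∀ y ∉ Y.dom \ l.toFinset, s y = default) ∧
    {v : Fin l.length → α | updVec s l v ∈ Y.assignments} ∈ QM}
  supported := fun _ hs => hs.1

/-- `Qx Y` for a (local) generalized quantifier of type `⟨1⟩`. -/
def Team.q1app (x : ℕ) (QM : Set (Set α)) (Y : Team α) : Team α where
  dom := Y.dom.erase x
  assignments := {s | (∀ y ∉ Y.dom.erase x, s y = default) ∧
    {a : α | Function.update s x a ∈ Y.assignments} ∈ QM}
  supported := fun _ hs => hs.1

/-- The team `{ε}` consisting of just the empty assignment. -/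
def epsTeam (α : Type) [Inhabited α] : Team α where
  dom := ∅
  assignments := {fun _ => default}
  supported := by rintro s rfl y _; rfl

/-- `rel(X) ⊆ M^n`: the relation corresponding to a team, with `dom(X)` enumerated in
increasing order. -/
def Team.relSetN (X : Team α) (n : ℕ) (h : X.dom.card = n) : Set (Fin n → α) :=
  {v | ∃ s ∈ X.assignments, ∀ i, v i = s (X.dom.orderEmbOfFin h i)}

end Paper

namespace Paper

/-- Formulas of mt-logic: literals, internal connectives `⩓`/`⩔` (`iand`/`ior`),
external connectives `∧`/`∨` (`eand`/`eor`), and quantifiers. -/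
inductive MForm (σ : Sig) where
  | rel : (r : σ.Rel) → (Fin (σ.arR r) → Term σ) → MForm σ
  | nrel : (r : σ.Rel) → (Fin (σ.arR r) → Term σ) → MForm σ
  | eq : Term σ → Term σ → MForm σ
  | neq : Term σ → Term σ → MForm σ
  | iand : MForm σ → MForm σ → MForm σ
  | ior : MForm σ → MForm σ → MForm σ
  | eand : MForm σ → MForm σ → MForm σ
  | eor : MForm σ → MForm σ → MForm σ
  | ex : ℕ → MForm σ → MForm σ
  | all : ℕ → MForm σ → MForm σ

variable {σ : Sig} {α : Type} [Inhabited α]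

/-- Free variables of an mt-formula. -/
def MForm.fv : MForm σ → Finset ℕ
  | .rel _ ts | .nrel _ ts => Finset.univ.biUnion fun i => (ts i).fv
  | .eq t u | .neq t u => t.fv ∪ u.fv
  | .iand φ ψ | .ior φ ψ | .eand φ ψ | .eor φ ψ => φ.fv ∪ ψ.fv
  | .ex x φ | .all x φ => φ.fv.erase x

/-- Bound variables of an mt-formula. -/
def MForm.bv : MForm σ → Finset ℕ
  | .rel _ _ | .nrel _ _ | .eq _ _ | .neq _ _ => ∅
  | .iand φ ψ | .ior φ ψ | .eand φ ψ | .eor φ ψ => φ.bv ∪ ψ.bv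
  | .ex x φ | .all x φ => insert x φ.bv

/-- All variables occurring in an mt-formula (free, bound, or in terms). -/
def MForm.vars : MForm σ → Finset ℕ
  | .rel _ ts | .nrel _ ts => Finset.univ.biUnion fun i => (ts i).fv
  | .eq t u | .neq t u => t.fv ∪ u.fv
  | .iand φ ψ | .ior φ ψ | .eand φ ψ | .eor φ ψ => φ.vars ∪ ψ.vars
  | .ex x φ | .all x φ => insert x φ.vars

/-- An mt-formula is first-order if it contains no external connective `∧`/`∨`. -/
def MForm.isFO : MForm σ → Prop
  | .eand _ _ | .eor _ _ => False
  | .iand φ ψ | .ior φ ψ => φ.isFO ∧ ψ.isFO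
  | .ex _ φ | .all _ φ => φ.isFO
  | _ => True

/-- No quantifier `Qx` occurs within the scope of another quantifier `Q'x`. -/
def MForm.noRebind : MForm σ → Prop
  | .rel _ _ | .nrel _ _ | .eq _ _ | .neq _ _ => True
  | .iand φ ψ | .ior φ ψ | .eand φ ψ | .eor φ ψ => φ.noRebind ∧ ψ.noRebind
  | .ex x φ | .all x φ => x ∉ φ.bv ∧ φ.noRebind

/-- A formula is untangled if no quantifier `Qx` appears in the scope of another
quantifier `Q'x` and no variable is both free and bound. -/
def MForm.untangled (φ : MForm σ) : Prop := φ.noRebind ∧ Disjoint φ.fv φ.bv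

/-- Ordinary Tarskian satisfaction of an mt-formula by a single assignment
(both internal and external connectives are read classically). -/
def MForm.tsat (𝕄 : Struc σ α) : (ℕ → α) → MForm σ → Prop
  | s, .rel r ts => 𝕄.interpR r fun i => (ts i).eval 𝕄 s
  | s, .nrel r ts => ¬ 𝕄.interpR r fun i => (ts i).eval 𝕄 s
  | s, .eq t u => t.eval 𝕄 s = u.eval 𝕄 s
  | s, .neq t u => t.eval 𝕄 s ≠ u.eval 𝕄 s
  | s, .iand φ ψ => φ.tsat 𝕄 s ∧ ψ.tsat 𝕄 s
  | s, .ior φ ψ => φ.tsat 𝕄 s ∨ ψ.tsat 𝕄 s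
  | s, .eand φ ψ => φ.tsat 𝕄 s ∧ ψ.tsat 𝕄 s
  | s, .eor φ ψ => φ.tsat 𝕄 s ∨ ψ.tsat 𝕄 s
  | s, .ex x φ => ∃ a : α, φ.tsat 𝕄 (Function.update s x a)
  | s, .all x φ => ∀ a : α, φ.tsat 𝕄 (Function.update s x a)

/-- The semantic value `⟦φ⟧^𝕄_{d}`: the team with domain `d` of all assignments
satisfying `φ` in the Tarskian sense. -/
def SemVal (𝕄 : Struc σ α) (d : Finset ℕ) (φ : MForm σ) : Team α where
  dom := d
  assignments := {s | (∀ y ∉ d, s y = default) ∧ φ.tsat 𝕄 s}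
  supported := fun _ hs => hs.1

/-- Team satisfaction for mt-logic. -/
def MSat (𝕄 : Struc σ α) : MForm σ → Team α → Prop
  | .rel r ts, X => ∀ s : ℕ → α, (∀ y ∉ X.dom, s y = default) →
      (s ∈ X.assignments ↔ 𝕄.interpR r fun i => (ts i).eval 𝕄 s)
  | .nrel r ts, X => ∀ s : ℕ → α, (∀ y ∉ X.dom, s y = default) →
      (s ∈ X.assignments ↔ ¬ 𝕄.interpR r fun i => (ts i).eval 𝕄 s)
  | .eq t u, X => ∀ s : ℕ → α, (∀ y ∉ X.dom, s y = default) →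
      (s ∈ X.assignments ↔ t.eval 𝕄 s = u.eval 𝕄 s)
  | .neq t u, X => ∀ s : ℕ → α, (∀ y ∉ X.dom, s y = default) →
      (s ∈ X.assignments ↔ t.eval 𝕄 s ≠ u.eval 𝕄 s)
  | .iand φ ψ, X => ∃ Y Z : Team α, Y.dom = X.dom ∧ Z.dom = X.dom ∧
      X.assignments = Y.assignments ∩ Z.assignments ∧ MSat 𝕄 φ Y ∧ MSat 𝕄 ψ Z
  | .ior φ ψ, X => ∃ Y Z : Team α, Y.dom = X.dom ∧ Z.dom = X.dom ∧
      X.assignments = Y.assignments ∪ Z.assignments ∧ MSat 𝕄 φ Y ∧ MSat 𝕄 ψ Z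
  | .eand φ ψ, X => MSat 𝕄 φ X ∧ MSat 𝕄 ψ X
  | .eor φ ψ, X => MSat 𝕄 φ X ∨ MSat 𝕄 ψ X
  | .ex x φ, X => ∃ Y : Team α, x ∈ Y.dom ∧ Team.eexists x Y = Team.eexists x X ∧ MSat 𝕄 φ Y
  | .all x φ, X => ∃ Y : Team α, x ∈ Y.dom ∧ Team.eforall x Y = Team.eexists x X ∧ MSat 𝕄 φ Y

/-- Iterated existential quantification `∃w̄ φ`. -/
def MForm.exN (l : List ℕ) (φ : MForm σ) : MForm σ := l.foldr MForm.ex φ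

/-- Iterated universal quantification `∀w̄ φ`. -/
def MForm.allN (l : List ℕ) (φ : MForm σ) : MForm σ := l.foldr MForm.all φ

/-- The formula `⊤_{w̄} = ∃w̄ (w₀ = w₀ ∨ w₀ ≠ w₀)` with a designated `w₀ ∈ w̄`
(here `∨` is the external disjunction). -/
def TopW (l : List ℕ) (w₀ : ℕ) : MForm σ :=
  MForm.exN l (MForm.eor (MForm.eq (.var w₀) (.var w₀)) (MForm.neq (.var w₀) (.var w₀)))

/-- `⊤_{w̄}` with `w₀` taken to be the first variable of `w̄`. -/
def Top (l : List ℕ) : MForm σ := TopW l l.headI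

end Paper

/-!
Flatness: a team satisfies a first-order formula `ψ` exactly when it is `⟦ψ⟧`, so a
decomposition `X = Y ∩ Z` with `M, Y ⊨ ψ` forces `X ⊆ ⟦ψ⟧`, while
`X ⊆ ⟦ψ⟧` gives the decomposition `X = ⟦ψ⟧ ∩ X`.
It remains that `∃w̄ (w₀ = w₀ ∨ w₀ ≠ w₀)` holds in every team with domain `w̄`: peeling off
the quantifiers by `X ↦ X[M/x]` keeps the team determined by the remaining variables, and a
team determined by no variable at all is empty (satisfying `w₀ ≠ w₀`) or full
(satisfying `w₀ = w₀`).
-/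

namespace Paper

variable {σ : Sig} {α : Type} [Inhabited α]

theorem Team.ext {X Y : Team α} (hdom : X.dom = Y.dom) (hasg : X.assignments = Y.assignments) :
    X = Y := by
  cases X; cases Y; simp_all

theorem Team.update_default_mem_eexists {X : Team α} {s : ℕ → α} (hs : s ∈ X.assignments)
    (x : ℕ) : Function.update s x default ∈ (Team.eexists x X).assignments := by
  refine ⟨fun y hy => ?_, s x, by rwa [Function.update_idem, Function.update_eq_self]⟩
  by_cases hyx : y = x
  · simp [hyx]
  · rw [Function.update_of_ne hyx]
    exact X.supported s hs y fun h => hy (Finset.mem_erase.mpr ⟨hyx, h⟩)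

theorem MForm.tsat_of_msat {𝕄 : Struc σ α} {ψ : MForm σ} (hψ : ψ.isFO) {X : Team α}
    (hX : MSat 𝕄 ψ X) {s : ℕ → α} (hs : s ∈ X.assignments) : ψ.tsat 𝕄 s := by
  induction ψ generalizing X s with
  | rel | nrel | eq | neq => exact (hX s (X.supported s hs)).mp hs
  | iand φ χ ihφ ihχ =>
    obtain ⟨Y, Z, -, -, hYZ, hY, hZ⟩ := hX
    rw [hYZ] at hs
    exact ⟨ihφ hψ.1 hY hs.1, ihχ hψ.2 hZ hs.2⟩
  | ior φ χ ihφ ihχ =>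
    obtain ⟨Y, Z, -, -, hYZ, hY, hZ⟩ := hX
    rw [hYZ] at hs
    exact hs.imp (ihφ hψ.1 hY) (ihχ hψ.2 hZ)
  | eand | eor => exact hψ.elim
  | ex x φ ih =>
    obtain ⟨Y, -, hYX, hY⟩ := hX
    obtain ⟨-, a, ha⟩ := hYX ▸ Team.update_default_mem_eexists hs x
    exact ⟨a, by simpa using ih hψ hY ha⟩
  | all x φ ih =>
    obtain ⟨Y, hx, hYX, hY⟩ := hX
    obtain ⟨-, ha⟩ := hYX ▸ Team.update_default_mem_eexists hs x
    rw [if_pos hx] at ha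
    exact fun a => by simpa using ih hψ hY (ha a)

theorem update_supported_insert {d : Finset ℕ} {x : ℕ} {s : ℕ → α}
    (hs : ∀ y ∉ d.erase x, s y = default) (a : α) :
    ∀ y ∉ insert x d, Function.update s x a y = default := by
  intro y hy
  rw [Finset.mem_insert, not_or] at hy
  rw [Function.update_of_ne hy.1]
  exact hs y fun h => hy.2 (Finset.mem_of_mem_erase h)

theorem update_default_supported {d : Finset ℕ} {x : ℕ} {s : ℕ → α}
    (hs : ∀ y ∉ d.erase x, s y = default) :
    ∀ y ∉ d, Function.update s x (default : α) y = default := by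
  intro y hy
  by_cases hyx : y = x
  · simp [hyx]
  · rw [Function.update_of_ne hyx]
    exact hs y fun h => hy (Finset.mem_of_mem_erase h)

theorem eexists_semVal_insert (𝕄 : Struc σ α) (d : Finset ℕ) (x : ℕ) (φ : MForm σ) :
    Team.eexists x (SemVal 𝕄 (insert x d) φ) = Team.eexists x (SemVal 𝕄 d (.ex x φ)) := by
  apply Team.ext (Finset.erase_insert_eq_erase d x)
  ext s
  simp only [Team.eexists, SemVal, MForm.tsat, Finset.erase_insert_eq_erase,
      Function.update_idem, Set.mem_ofPred_eq]
  constructor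
  · rintro ⟨hs, a, -, ha⟩
    exact ⟨hs, default, update_default_supported hs, a, ha⟩
  · rintro ⟨hs, -, -, a, ha⟩
    exact ⟨hs, a, update_supported_insert hs a, ha⟩

theorem eforall_semVal_insert (𝕄 : Struc σ α) (d : Finset ℕ) (x : ℕ) (φ : MForm σ) :
    Team.eforall x (SemVal 𝕄 (insert x d) φ) = Team.eexists x (SemVal 𝕄 d (.all x φ)) := by
  apply Team.ext (Finset.erase_insert_eq_erase d x)
  ext s
  simp only [Team.eforall, Team.eexists, SemVal, MForm.tsat, Finset.erase_insert_eq_erase,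
      Function.update_idem, Set.mem_ofPred_eq, Finset.mem_insert_self, if_true]
  constructor
  · rintro ⟨hs, ha⟩
    exact ⟨hs, default, update_default_supported hs, fun a => (ha a).2⟩
  · rintro ⟨hs, -, -, ha⟩
    exact ⟨hs, fun a => ⟨update_supported_insert hs a, ha a⟩⟩

theorem MForm.msat_semVal (𝕄 : Struc σ α) {ψ : MForm σ} (hψ : ψ.isFO) (d : Finset ℕ) :
    MSat 𝕄 ψ (SemVal 𝕄 d ψ) := by
  induction ψ generalizing d with
  | rel | nrel | eq | neq => exact fun s hs => ⟨And.right, And.intro hs⟩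
  | iand φ χ ihφ ihχ =>
    refine ⟨SemVal 𝕄 d φ, SemVal 𝕄 d χ, rfl, rfl, ?_, ihφ hψ.1 d, ihχ hψ.2 d⟩
    ext s
    simp only [SemVal, MForm.tsat, Set.mem_ofPred_eq, Set.mem_inter_iff]
    tauto
  | ior φ χ ihφ ihχ =>
    refine ⟨SemVal 𝕄 d φ, SemVal 𝕄 d χ, rfl, rfl, ?_, ihφ hψ.1 d, ihχ hψ.2 d⟩
    ext s
    simp only [SemVal, MForm.tsat, Set.mem_ofPred_eq, Set.mem_union]
    tauto
  | eand | eor => exact hψ.elim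
  | ex x φ ih =>
    exact ⟨_, Finset.mem_insert_self x d, eexists_semVal_insert 𝕄 d x φ, ih hψ _⟩
  | all x φ ih =>
    exact ⟨_, Finset.mem_insert_self x d, eforall_semVal_insert 𝕄 d x φ, ih hψ _⟩

def Team.DeterminedBy (X : Team α) (l : List ℕ) : Prop :=
  ∀ s ∈ X.assignments, ∀ t : ℕ → α, (∀ y ∉ X.dom, t y = default) →
    (∀ y ∈ l, t y = s y) → t ∈ X.assignments

theorem Team.determinedBy_of_dom_subset {X : Team α} {l : List ℕ} (h : X.dom ⊆ l.toFinset) :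
    X.DeterminedBy l := by
  intro s hs t ht hts
  convert hs using 1
  funext y
  by_cases hy : y ∈ X.dom
  · exact hts y (List.mem_toFinset.mp (h hy))
  · rw [ht y hy, X.supported s hs y hy]

theorem Team.DeterminedBy.eq_empty_or_eq_full {X : Team α} (hX : X.DeterminedBy []) :
    X.assignments = ∅ ∨ X.assignments = (Team.full α X.dom).assignments := by
  rcases X.assignments.eq_empty_or_nonempty with hempty | ⟨s, hs⟩
  · exact Or.inl hempty
  · exact Or.inr <| Set.ext fun t =>
      ⟨X.supported t, fun ht => hX s hs t ht (by simp)⟩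

theorem msat_eq_self_of_eq_full (𝕄 : Struc σ α) (t : Term σ) {X : Team α}
    (hX : X.assignments = (Team.full α X.dom).assignments) : MSat 𝕄 (.eq t t) X :=
  fun s hs => by simpa [hX, Team.full] using hs

theorem msat_neq_self_of_eq_empty (𝕄 : Struc σ α) (t : Term σ) {X : Team α}
    (hX : X.assignments = ∅) : MSat 𝕄 (.neq t t) X :=
  fun s _ => by simp [hX]

theorem Team.eexists_subM (X : Team α) (x : ℕ) : Team.eexists x (X.subM x) = Team.eexists x X := by
  apply Team.ext (Finset.erase_insert_eq_erase X.dom x)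
  ext s
  simp only [Team.eexists, Team.subM, Finset.erase_insert_eq_erase, Set.mem_ofPred_eq]
  constructor
  · rintro ⟨hs, a, s', hs', b, h⟩
    refine ⟨hs, s' x, ?_⟩
    rwa [← Function.update_idem a, h, Function.update_idem, Function.update_eq_self]
  · rintro ⟨hs, a, ha⟩
    exact ⟨hs, a, _, ha, a, by rw [Function.update_idem]⟩

theorem Team.DeterminedBy.subM {X : Team α} {x : ℕ} {l : List ℕ} (hX : X.DeterminedBy (x :: l)) :
    (X.subM x).DeterminedBy l := by
  rintro _ ⟨s, hs, a, rfl⟩ t ht hts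
  refine ⟨Function.update t x (s x), hX s hs _ ?_ ?_, t x, ?_⟩
  · intro y hy
    by_cases hyx : y = x
    · subst hyx
      simpa using X.supported s hs y hy
    · rw [Function.update_of_ne hyx]
      exact ht y (by simp [Team.subM, hyx, hy])
  · rintro y (_ | ⟨_, hy⟩)
    · simp
    · by_cases hyx : y = x
      · subst hyx
        simp
      · rw [Function.update_of_ne hyx, hts y hy, Function.update_of_ne hyx]
  · rw [Function.update_idem, Function.update_eq_self]

theorem msat_topW_of_determinedBy (𝕄 : Struc σ α) (w₀ : ℕ) {l : List ℕ} {X : Team α}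
    (hX : X.DeterminedBy l) : MSat 𝕄 (TopW l w₀) X := by
  induction l generalizing X with
  | nil =>
    rcases hX.eq_empty_or_eq_full with hempty | hfull
    · exact Or.inr (msat_neq_self_of_eq_empty 𝕄 _ hempty)
    · exact Or.inl (msat_eq_self_of_eq_full 𝕄 _ hfull)
  | cons x l ih =>
    exact ⟨X.subM x, Finset.mem_insert_self x X.dom, X.eexists_subM x, ih hX.subM⟩

theorem msat_iand_top_general {σ : Sig} {α : Type} [Inhabited α] (𝕄 : Struc σ α)
    (ψ : MForm σ) (hFO : ψ.isFO) (X : Team α)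
    (l : List ℕ) (hl : l.toFinset = X.dom)
    (w₀ : ℕ) :
    MSat 𝕄 (MForm.iand ψ (TopW l w₀)) X ↔
      X.assignments ⊆ (SemVal 𝕄 X.dom ψ).assignments := by
  constructor
  · rintro ⟨Y, Z, -, -, hYZ, hY, -⟩ s hs
    have hsY : s ∈ Y.assignments := (hYZ ▸ hs).1
    exact ⟨X.supported s hs, MForm.tsat_of_msat hFO hY hsY⟩
  · intro hX
    exact ⟨SemVal 𝕄 X.dom ψ, X, rfl, rfl, (Set.inter_eq_self_of_subset_right hX).symm,
      MForm.msat_semVal 𝕄 hFO X.dom,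
      msat_topW_of_determinedBy 𝕄 w₀ (Team.determinedBy_of_dom_subset hl.ge)⟩

/-- STATEMENT 11: If `ψ` is a first-order formula, `X` a team with `dom(X) = {w̄}`
(the variables of the repetition-free list `l`), `FV(ψ) ⊆ {w̄}` and `w₀ ∈ w̄`, then
`M,X ⊨_mt ψ ⩓ ∃w̄ (w₀ = w₀ ∨ w₀ ≠ w₀)` iff `X ⊆ ⟦ψ⟧^M_{w̄}`. -/
theorem msat_iand_top {σ : Sig} {α : Type} [Inhabited α] (𝕄 : Struc σ α)
    (ψ : MForm σ) (hFO : ψ.isFO) (X : Team α) (hfv : ψ.fv ⊆ X.dom)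
    (l : List ℕ) (hnd : l.Nodup) (hl : l.toFinset = X.dom)
    (w₀ : ℕ) (hw₀ : w₀ ∈ X.dom) :
    MSat 𝕄 (MForm.iand ψ (TopW l w₀)) X ↔
      X.assignments ⊆ (SemVal 𝕄 X.dom ψ).assignments :=
  msat_iand_top_general 𝕄 ψ hFO X l hl w₀

end Paper
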